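/- For every A > 0 and every λ ∈ ℂ ∖ Σ_A one has: (i) det D_A(λ) = 1; (ii) D_A(λ)·E_A(λ) = I, so that E_A(λ) is the inverse matrix of D_A(λ); and (iii) D_A(λ)·[[−1, λA],[−λA, 1]]·E_A(λ) = −i·A·k_A(λ)·σ₃, i.e. D_A diagonalizes the matrix [[−1, λA],[−λA, 1]] with eigenvalue matrix −i·A·k_A(λ)·σ₃. -/

import Mathlib

/-!
Put z = i·A·k_A(λ), a = λA, m = a/(1 − z) and c = s(1/z − 1)/√2, so that
D_A = c·[[m, −1], [−1, m]] and E_A = c·[[m, 1], [1, m]], the latter being c times the adjugate of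
[[m, −1], [−1, m]]. Everything follows from two scalar relations, z² = 1 − a² (so ±z are the
eigenvalues of [[−1, a], [−a, 1]]) and 2zc² = 1 − z, together with z ≠ 1. The relation for c needs
z ≠ 0, i.e. λ² ≠ 1/A², and z ≠ 1 holds because z = −A·√(1/A² − λ²) has
nonpositive real part, the principal square root lying in the closed right half-plane.
-/

open Complex Matrix MeasureTheory Filter

noncomputable def csqrt (z : ℂ) : ℂ := z ^ (1/2 : ℂ)

noncomputable def sB (w : ℂ) : ℂ := Complex.I * csqrt (-w)

def SigmaSet (A : ℝ) : Set ℂ := Complex.ofReal '' (Set.Iic (-(1/A)) ∪ Set.Ici (1/A))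

noncomputable def kA (A : ℝ) (l : ℂ) : ℂ := Complex.I * csqrt (1/(A:ℂ)^2 - l^2)

noncomputable def DA (A : ℝ) (l : ℂ) : Matrix (Fin 2) (Fin 2) ℂ :=
  (((Real.sqrt 2 : ℝ) : ℂ)⁻¹ * sB (1/(Complex.I * (A:ℂ) * kA A l) - 1)) •
    !![l * (A:ℂ) / (1 - Complex.I * (A:ℂ) * kA A l), -1;
       -1, l * (A:ℂ) / (1 - Complex.I * (A:ℂ) * kA A l)]

noncomputable def EA (A : ℝ) (l : ℂ) : Matrix (Fin 2) (Fin 2) ℂ :=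
  (((Real.sqrt 2 : ℝ) : ℂ)⁻¹ * sB (1/(Complex.I * (A:ℂ) * kA A l) - 1)) •
    !![l * (A:ℂ) / (1 - Complex.I * (A:ℂ) * kA A l), 1;
       1, l * (A:ℂ) / (1 - Complex.I * (A:ℂ) * kA A l)]

def sigma1 : Matrix (Fin 2) (Fin 2) ℂ := !![0, 1; 1, 0]
def sigma2 : Matrix (Fin 2) (Fin 2) ℂ := !![0, -Complex.I; Complex.I, 0]
def sigma3 : Matrix (Fin 2) (Fin 2) ℂ := !![1, 0; 0, -1]

section Frame

variable {K : Type*} [Field K]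

def frame (c m s : K) : Matrix (Fin 2) (Fin 2) K := c • !![m, s; s, m]

lemma frame_neg_one_conj (c m a : K) :
    frame c m (-1) * !![-1, a; -a, 1] * frame c m 1 =
      c ^ 2 • !![2 * a * m - m ^ 2 - 1, a * (1 + m ^ 2) - 2 * m;
        -(a * (1 + m ^ 2) - 2 * m), -(2 * a * m - m ^ 2 - 1)] := by
  rw [frame, frame, smul_mul_assoc, smul_mul_smul_comm, ← sq]
  congr 1
  ext i j; fin_cases i <;> fin_cases j <;> simp [Matrix.mul_apply, Fin.sum_univ_two] <;> ring

variable {a z c : K}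

lemma sq_mul_sq_div_sub_one (hz : z ^ 2 = 1 - a ^ 2) (hc : 2 * z * c ^ 2 = 1 - z) (h1 : z ≠ 1) :
    c ^ 2 * ((a / (1 - z)) ^ 2 - 1) = 1 := by
  have : 1 - z ≠ 0 := sub_ne_zero.mpr h1.symm
  field_simp
  linear_combination c ^ 2 * hz + (1 - z) * hc

lemma mul_one_add_sq_div (hz : z ^ 2 = 1 - a ^ 2) (h1 : z ≠ 1) :
    a * (1 + (a / (1 - z)) ^ 2) = 2 * (a / (1 - z)) := by
  have : 1 - z ≠ 0 := sub_ne_zero.mpr h1.symm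
  field_simp
  linear_combination a * hz

lemma sq_mul_two_mul_div_sub (hz : z ^ 2 = 1 - a ^ 2) (hc : 2 * z * c ^ 2 = 1 - z) (h1 : z ≠ 1) :
    c ^ 2 * (2 * a * (a / (1 - z)) - (a / (1 - z)) ^ 2 - 1) = -z := by
  have : 1 - z ≠ 0 := sub_ne_zero.mpr h1.symm
  field_simp
  linear_combination c ^ 2 * (1 - 2 * z) * hz - z * (1 - z) * hc

lemma det_frame_neg_one (hz : z ^ 2 = 1 - a ^ 2) (hc : 2 * z * c ^ 2 = 1 - z) (h1 : z ≠ 1) :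
    (frame c (a / (1 - z)) (-1)).det = 1 := by
  rw [frame, Matrix.det_smul, Matrix.det_fin_two_of, Fintype.card_fin]
  linear_combination sq_mul_sq_div_sub_one hz hc h1

lemma frame_neg_one_mul_frame_one (hz : z ^ 2 = 1 - a ^ 2) (hc : 2 * z * c ^ 2 = 1 - z)
    (h1 : z ≠ 1) :
    frame c (a / (1 - z)) (-1) * frame c (a / (1 - z)) 1 = 1 := by
  have hdet := det_frame_neg_one hz hc h1
  set m := a / (1 - z)
  have hadj : !![m, 1; 1, m] = adjugate !![m, -1; -1, m] := by simp [adjugate_fin_two_of]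
  rw [frame, Matrix.det_smul, Fintype.card_fin] at hdet
  rw [frame, frame, smul_mul_smul_comm, ← sq, hadj, mul_adjugate, smul_smul, hdet, one_smul]

lemma frame_neg_one_conj_eq (hz : z ^ 2 = 1 - a ^ 2) (hc : 2 * z * c ^ 2 = 1 - z) (h1 : z ≠ 1) :
    frame c (a / (1 - z)) (-1) * !![-1, a; -a, 1] * frame c (a / (1 - z)) 1 =
      (-z) • !![1, 0; 0, -1] := by
  rw [frame_neg_one_conj, mul_one_add_sq_div hz h1, sub_self]
  have hdiag := sq_mul_two_mul_div_sub hz hc h1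
  ext i j
  fin_cases i <;> fin_cases j
  · simpa using hdiag
  · simp
  · simp
  · simp
    linear_combination -hdiag

end Frame

lemma csqrt_sq (u : ℂ) : csqrt u ^ 2 = u := by
  rcases eq_or_ne u 0 with rfl | hu
  · simp [csqrt]
  · rw [csqrt, ← cpow_nat_mul]; norm_num

lemma re_csqrt_nonneg (u : ℂ) : 0 ≤ (csqrt u).re := by
  rw [csqrt, one_div, cpow_inv_two_re]
  positivity

lemma csqrt_ne_zero {u : ℂ} (hu : u ≠ 0) : csqrt u ≠ 0 := by
  rw [csqrt, Ne, cpow_eq_zero_iff]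
  exact fun h => hu h.1

lemma sB_sq (w : ℂ) : sB w ^ 2 = w := by
  rw [sB, mul_pow, I_sq, csqrt_sq]
  ring

lemma two_mul_mul_sq_sB {z : ℂ} (hz : z ≠ 0) :
    2 * z * (((Real.sqrt 2 : ℝ) : ℂ)⁻¹ * sB (1 / z - 1)) ^ 2 = 1 - z := by
  have hsqrt2 : (((Real.sqrt 2 : ℝ) : ℂ)⁻¹) ^ 2 = 1 / 2 := by
    rw [inv_pow, ← ofReal_pow, Real.sq_sqrt zero_le_two]
    norm_num
  rw [mul_pow, sB_sq, hsqrt2]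
  field_simp

lemma one_div_sq_sub_sq_ne_zero {A : ℝ} {l : ℂ} (hl : l ∉ SigmaSet A) :
    1 / (A : ℂ) ^ 2 - l ^ 2 ≠ 0 := by
  intro h
  have hfac : (l - 1 / (A : ℂ)) * (l + 1 / (A : ℂ)) = 0 := by linear_combination -h
  rcases mul_eq_zero.mp hfac with h' | h'
  · exact hl ⟨1 / A, Or.inr Set.self_mem_Ici, by push_cast; linear_combination -h'⟩
  · exact hl ⟨-(1 / A), Or.inl Set.self_mem_Iic, by push_cast; linear_combination -h'⟩

lemma I_mul_mul_kA (A : ℝ) (l : ℂ) :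
    I * A * kA A l = -(A * csqrt (1 / (A : ℂ) ^ 2 - l ^ 2)) := by
  rw [kA]
  linear_combination (A * csqrt (1 / (A : ℂ) ^ 2 - l ^ 2)) * I_sq

lemma sq_I_mul_mul_kA {A : ℝ} (hA : (A : ℂ) ≠ 0) (l : ℂ) :
    (I * A * kA A l) ^ 2 = 1 - (l * A) ^ 2 := by
  rw [I_mul_mul_kA, neg_sq, mul_pow, csqrt_sq]
  field_simp

lemma I_mul_mul_kA_ne_zero {A : ℝ} (hA : (A : ℂ) ≠ 0) {l : ℂ} (hl : l ∉ SigmaSet A) :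
    I * A * kA A l ≠ 0 := by
  rw [I_mul_mul_kA, neg_ne_zero]
  exact mul_ne_zero hA (csqrt_ne_zero (one_div_sq_sub_sq_ne_zero hl))

lemma I_mul_mul_kA_ne_one {A : ℝ} (hA : 0 < A) (l : ℂ) : I * A * kA A l ≠ 1 := by
  intro h
  have hre := congrArg re h
  rw [I_mul_mul_kA, neg_re, re_ofReal_mul, one_re] at hre
  nlinarith [re_csqrt_nonneg (1 / (A : ℂ) ^ 2 - l ^ 2)]

/-- det D_A = 1, E_A is the inverse of D_A, and D_A diagonalizes
[[−1, λA],[−λA, 1]] with eigenvalue matrix −i·A·k_A(λ)·σ₃. -/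
theorem stmt_1 (A : ℝ) (hA : 0 < A) (l : ℂ) (hl : l ∉ SigmaSet A) :
    (DA A l).det = 1 ∧
    DA A l * EA A l = 1 ∧
    DA A l * !![-1, l * (A:ℂ); -(l * (A:ℂ)), 1] * EA A l
      = (-(Complex.I) * (A:ℂ) * kA A l) • sigma3 := by
  have hA0 : (A : ℂ) ≠ 0 := ofReal_ne_zero.mpr hA.ne'
  have hz := sq_I_mul_mul_kA hA0 l
  have hc := two_mul_mul_sq_sB (I_mul_mul_kA_ne_zero hA0 hl)
  have h1 := I_mul_mul_kA_ne_one hA l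
  rw [neg_mul, neg_mul]
  exact ⟨det_frame_neg_one hz hc h1, frame_neg_one_mul_frame_one hz hc h1,
    frame_neg_one_conj_eq hz hc h1⟩
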